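/- Let $u$ solve $-\nabla\cdot\boldsymbol{a}\nabla u = \nabla\cdot f$ and $\bar u$ solve $-\nabla\cdot\bar{\boldsymbol{a}}\nabla\bar u = \nabla\cdot f$ in $\mathbb{R}^d$ (Lax–Milgram solutions in $\dot H^1$), where $\boldsymbol{a}$ is a measurable uniformly elliptic coefficient field and $\bar{\boldsymbol{a}}$ is constant. Let $\phi_i, \sigma_i$ be the extended correctors satisfying $-\nabla\cdot\boldsymbol{a}(\nabla\phi_i + e_i) = 0$, $\nabla\cdot\sigma_i = \boldsymbol{a}(\nabla\phi_i + e_i) - \bar{\boldsymbol{a}}e_i$ with $\sigma_i$ skew-symmetric, and all fields sufficiently smooth. Then the two-scale expansion error $w := u - (1 + \phi_i\nabla_i)\bar u$ satisfies $-\nabla\cdot\boldsymbol{a}\nabla w = \nabla\cdot\big((\boldsymbol{a}\phi_j - \sigma_j)\nabla\nabla_j\bar u\big)$ in the distributional sense. -/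

import Mathlib

open Matrix

noncomputable def pd {d : ℕ} (u : (Fin d → ℝ) → ℝ) (i : Fin d) (x : Fin d → ℝ) : ℝ :=
  fderiv ℝ u x (Pi.single i 1)

noncomputable def grad {d : ℕ} (u : (Fin d → ℝ) → ℝ) (x : Fin d → ℝ) : Fin d → ℝ :=
  fun i => pd u i x

/-- divergence of a vector field -/
noncomputable def dvg {d : ℕ} (V : (Fin d → ℝ) → Fin d → ℝ) (x : Fin d → ℝ) : ℝ :=
  ∑ i, pd (fun y => V y i) i x

section helpers
variable {d : ℕ} {u v : (Fin d → ℝ) → ℝ} {i j : Fin d} {x : Fin d → ℝ}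

@[fun_prop]
lemma cd_pd (hu : ContDiff ℝ (⊤ : ℕ∞) u) (i : Fin d) : ContDiff ℝ (⊤ : ℕ∞) (pd u i) :=
  (hu.fderiv_right (by simp)).clm_apply contDiff_const

@[fun_prop]
lemma diff_pd (hu : ContDiff ℝ (⊤ : ℕ∞) u) (i : Fin d) : Differentiable ℝ (pd u i) :=
  (cd_pd hu i).differentiable (by simp)

lemma pd_add (hu : DifferentiableAt ℝ u x) (hv : DifferentiableAt ℝ v x) :
    pd (fun y => u y + v y) i x = pd u i x + pd v i x := by
  simp [pd, fderiv_fun_add hu hv]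

lemma pd_sub (hu : DifferentiableAt ℝ u x) (hv : DifferentiableAt ℝ v x) :
    pd (fun y => u y - v y) i x = pd u i x - pd v i x := by
  simp [pd, fderiv_fun_sub hu hv]

lemma pd_mul (hu : DifferentiableAt ℝ u x) (hv : DifferentiableAt ℝ v x) :
    pd (fun y => u y * v y) i x = pd u i x * v x + u x * pd v i x := by
  simp [pd, fderiv_fun_mul hu hv]; ring

lemma pd_const (c : ℝ) : pd (fun _ => c) i x = 0 := by simp [pd]

lemma pd_neg : pd (fun y => -u y) i x = -pd u i x := by
  simp [pd, fderiv_neg]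

lemma pd_sum {ι : Type*} (s : Finset ι) (F : ι → (Fin d → ℝ) → ℝ)
    (hF : ∀ j ∈ s, DifferentiableAt ℝ (F j) x) :
    pd (fun y => ∑ j ∈ s, F j y) i x = ∑ j ∈ s, pd (F j) i x := by
  simp only [pd]; rw [fderiv_fun_sum hF]; simp

lemma pd_comm (hu : ContDiff ℝ (⊤ : ℕ∞) u) :
    pd (fun y => pd u i y) j x = pd (fun y => pd u j y) i x := by
  have hsym : IsSymmSndFDerivAt ℝ u x := hu.contDiffAt.isSymmSndFDerivAt (by rw [minSmoothness_of_isRCLikeNormedField]; exact WithTop.coe_le_coe.mpr le_top)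
  have hdiff : DifferentiableAt ℝ (fderiv ℝ u) x :=
    ((hu.fderiv_right (m := 1) (by exact WithTop.coe_le_coe.mpr le_top)).differentiable one_ne_zero).differentiableAt
  have key : ∀ v w : Fin d → ℝ,
      fderiv ℝ (fun y => fderiv ℝ u y v) x w = fderiv ℝ (fderiv ℝ u) x w v := by
    intro v w
    have h : (fun y => fderiv ℝ u y v) =
        (ContinuousLinearMap.apply ℝ ℝ v) ∘ (fderiv ℝ u) := rfl
    rw [h, fderiv_comp x ((ContinuousLinearMap.apply ℝ ℝ v).differentiableAt) hdiff]
    simp [ContinuousLinearMap.fderiv]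
  simp only [pd, key]
  exact hsym.eq _ _

end helpers

lemma alg (d : ℕ) (F : ℝ) (a a1 Abar : Fin d → Fin d → ℝ)
    (p b g : Fin d → ℝ) (p2 c g1 : Fin d → Fin d → ℝ)
    (t g2 s : Fin d → Fin d → Fin d → ℝ) (s1 : Fin d → Fin d → Fin d → Fin d → ℝ)
    (ht : ∀ j k l, t j k l = t j l k)
    (hs : ∀ j k l, s j k l = - s j l k)
    (hs1 : ∀ j k l m, s1 j k l m = - s1 j l k m)
    (h1 : -∑ k, ∑ j, (a1 k j * p j + a k j * p2 j k) = F)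
    (h2 : -∑ k, ∑ j, Abar k j * c j k = F)
    (h3 : ∀ i, ∑ k, ∑ j,
      (a1 k j * (g1 i j + if j = i then 1 else 0) + a k j * g2 i j k) = 0)
    (h5 : ∀ j k, ∑ l, s1 j k l l =
      ∑ l, a k l * (g1 j l + if l = j then 1 else 0) - Abar k j) :
    -∑ k, ∑ j, (a1 k j * (p j - (b j + ∑ i, (g1 i j * b i + g i * c i j)))
        + a k j * (p2 j k - (c j k + ∑ i, (g2 i j k * b i + g1 i j * c i k
            + (g1 i k * c i j + g i * t i j k)))))
      = ∑ k, ∑ j, ∑ l, ((g1 j k * a k l + g j * a1 k l - s1 j k l k) * c j l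
          + (g j * a k l - s j k l) * t j l k) := by
  classical
  have perm2 : ∀ (g : Fin d → Fin d → ℝ), ∑ x, ∑ y, g x y = ∑ y, ∑ x, g x y :=
    fun g => Finset.sum_comm
  have perm12 : ∀ (g : Fin d → Fin d → Fin d → ℝ),
      ∑ x, ∑ y, ∑ z, g x y z = ∑ y, ∑ x, ∑ z, g x y z := fun g => Finset.sum_comm
  have perm23 : ∀ (g : Fin d → Fin d → Fin d → ℝ),
      ∑ x, ∑ y, ∑ z, g x y z = ∑ x, ∑ z, ∑ y, g x y z :=
    fun g => Finset.sum_congr rfl fun _ _ => Finset.sum_comm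
  have sum3congr : ∀ (g h : Fin d → Fin d → Fin d → ℝ),
      (∀ x y z, g x y z = h x y z) → ∑ x, ∑ y, ∑ z, g x y z = ∑ x, ∑ y, ∑ z, h x y z :=
    fun g h e => by simp only [e]
  -- expand LHS of the goal
  have EL : ∑ k, ∑ j, (a1 k j * (p j - (b j + ∑ i, (g1 i j * b i + g i * c i j)))
        + a k j * (p2 j k - (c j k + ∑ i, (g2 i j k * b i + g1 i j * c i k
            + (g1 i k * c i j + g i * t i j k)))))
      = (∑ k, ∑ j, (a1 k j * p j + a k j * p2 j k))
        - ((∑ k, ∑ j, a1 k j * b j) + (∑ k, ∑ j, a k j * c j k))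
        - ((∑ k, ∑ j, ∑ i, a1 k j * (g1 i j * b i))
          + (∑ k, ∑ j, ∑ i, a1 k j * (g i * c i j))
          + (∑ k, ∑ j, ∑ i, a k j * (g2 i j k * b i))
          + (∑ k, ∑ j, ∑ i, a k j * (g1 i j * c i k))
          + (∑ k, ∑ j, ∑ i, a k j * (g1 i k * c i j))
          + (∑ k, ∑ j, ∑ i, a k j * (g i * t i j k))) := by
    simp only [mul_add, add_mul, mul_sub, sub_mul, Finset.mul_sum, Finset.sum_mul,
      Finset.sum_add_distrib, Finset.sum_sub_distrib]
    try ring_nf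
  -- expand RHS of the goal
  have ER : ∑ k, ∑ j, ∑ l, ((g1 j k * a k l + g j * a1 k l - s1 j k l k) * c j l
          + (g j * a k l - s j k l) * t j l k)
      = (∑ k, ∑ j, ∑ l, g1 j k * (a k l * c j l))
        + (∑ k, ∑ j, ∑ l, g j * (a1 k l * c j l))
        - (∑ k, ∑ j, ∑ l, s1 j k l k * c j l)
        + (∑ k, ∑ j, ∑ l, g j * (a k l * t j l k))
        - (∑ k, ∑ j, ∑ l, s j k l * t j l k) := by
    simp only [mul_add, add_mul, mul_sub, sub_mul, Finset.mul_sum, Finset.sum_mul,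
      Finset.sum_add_distrib, Finset.sum_sub_distrib]
    try ring_nf
  -- fold h3 against b
  have H3 : ∀ i, (∑ k, ∑ j, (a1 k j * g1 i j + a k j * g2 i j k)) + (∑ k, a1 k i) = 0 := by
    intro i
    have e : ∀ k, ∑ j, (a1 k j * (g1 i j + if j = i then 1 else 0) + a k j * g2 i j k)
        = (∑ j, (a1 k j * g1 i j + a k j * g2 i j k)) + a1 k i := by
      intro k
      rw [show (∑ j, (a1 k j * (g1 i j + if j = i then 1 else 0) + a k j * g2 i j k))
          = ∑ j, ((a1 k j * g1 i j + a k j * g2 i j k) + if j = i then a1 k j else 0) from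
        Finset.sum_congr rfl fun j _ => by by_cases h : j = i <;> simp [h] <;> ring]
      rw [Finset.sum_add_distrib, Finset.sum_ite_eq' Finset.univ i (fun j => a1 k j)]
      simp
    have := h3 i
    rw [Finset.sum_congr rfl (fun k _ => e k), Finset.sum_add_distrib] at this
    exact this
  have HB : (∑ k, ∑ j, ∑ i, a1 k j * (g1 i j * b i))
      + (∑ k, ∑ j, ∑ i, a k j * (g2 i j k * b i))
      + (∑ k, ∑ j, a1 k j * b j) = 0 := by
    have step : ∑ i, (b i * ((∑ k, ∑ j, (a1 k j * g1 i j + a k j * g2 i j k))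
        + (∑ k, a1 k i))) = 0 := by
      simp only [H3, mul_zero, Finset.sum_const_zero]
    have expand : ∑ i, (b i * ((∑ k, ∑ j, (a1 k j * g1 i j + a k j * g2 i j k))
        + (∑ k, a1 k i)))
        = (∑ i, ∑ k, ∑ j, b i * (a1 k j * g1 i j))
          + (∑ i, ∑ k, ∑ j, b i * (a k j * g2 i j k))
          + (∑ i, ∑ k, b i * a1 k i) := by
      simp only [mul_add, add_mul, mul_sub, sub_mul, Finset.mul_sum, Finset.sum_mul,
        Finset.sum_add_distrib, Finset.sum_sub_distrib]
      try ring_nf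
    have m1 : (∑ i, ∑ k, ∑ j, b i * (a1 k j * g1 i j))
        = ∑ k, ∑ j, ∑ i, a1 k j * (g1 i j * b i) := by
      refine ((perm12 (fun i k j => b i * (a1 k j * g1 i j))).trans ?_)
      refine ((perm23 (fun k i j => b i * (a1 k j * g1 i j))).trans ?_)
      exact sum3congr _ _ fun k j i => by ring
    have m2 : (∑ i, ∑ k, ∑ j, b i * (a k j * g2 i j k))
        = ∑ k, ∑ j, ∑ i, a k j * (g2 i j k * b i) := by
      refine ((perm12 (fun i k j => b i * (a k j * g2 i j k))).trans ?_)
      refine ((perm23 (fun k i j => b i * (a k j * g2 i j k))).trans ?_)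
      exact sum3congr _ _ fun k j i => by ring
    have m3 : (∑ i, ∑ k, b i * a1 k i) = ∑ k, ∑ j, a1 k j * b j := by
      refine (perm2 (fun i k => b i * a1 k i)).trans ?_
      exact Finset.sum_congr rfl fun k _ => Finset.sum_congr rfl fun j _ => by ring
    rw [expand, m1, m2, m3] at step
    linarith
  -- fold h5 against c
  have H5 : (∑ j, ∑ k, c j k * ∑ l, s1 j k l l)
      = (∑ k, ∑ j, ∑ i, a k j * (g1 i j * c i k))
        + (∑ k, ∑ j, a k j * c j k)
        - (∑ k, ∑ j, Abar k j * c j k) := by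
    have e5 : ∀ j k, ∑ l, s1 j k l l = (∑ l, a k l * g1 j l) + a k j - Abar k j := by
      intro j k
      have := h5 j k
      rw [show (∑ l, a k l * (g1 j l + if l = j then 1 else 0))
          = ∑ l, ((a k l * g1 j l) + if l = j then a k l else 0) from
        Finset.sum_congr rfl fun l _ => by by_cases h : l = j <;> simp [h] <;> ring,
        Finset.sum_add_distrib, Finset.sum_ite_eq' Finset.univ j (fun l => a k l)] at this
      simp at this
      linarith
    have expand : (∑ j, ∑ k, c j k * ((∑ l, a k l * g1 j l) + a k j - Abar k j))
        = (∑ j, ∑ k, ∑ l, c j k * (a k l * g1 j l))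
          + (∑ j, ∑ k, c j k * a k j)
          - (∑ j, ∑ k, c j k * Abar k j) := by
      simp only [mul_add, add_mul, mul_sub, sub_mul, Finset.mul_sum, Finset.sum_mul,
        Finset.sum_add_distrib, Finset.sum_sub_distrib]
      try ring_nf
    have m4 : (∑ j, ∑ k, ∑ l, c j k * (a k l * g1 j l))
        = ∑ k, ∑ j, ∑ i, a k j * (g1 i j * c i k) := by
      refine ((perm12 (fun j k l => c j k * (a k l * g1 j l))).trans ?_)
      refine ((perm23 (fun k j l => c j k * (a k l * g1 j l))).trans ?_)
      exact sum3congr _ _ fun k j i => by ring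
    have m5 : (∑ j, ∑ k, c j k * a k j) = ∑ k, ∑ j, a k j * c j k := by
      refine (perm2 (fun j k => c j k * a k j)).trans ?_
      exact Finset.sum_congr rfl fun k _ => Finset.sum_congr rfl fun j _ => by ring
    have m6 : (∑ j, ∑ k, c j k * Abar k j) = ∑ k, ∑ j, Abar k j * c j k := by
      refine (perm2 (fun j k => c j k * Abar k j)).trans ?_
      exact Finset.sum_congr rfl fun k _ => Finset.sum_congr rfl fun j _ => by ring
    calc ∑ j, ∑ k, c j k * ∑ l, s1 j k l l
        = ∑ j, ∑ k, c j k * ((∑ l, a k l * g1 j l) + a k j - Abar k j) := by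
          exact Finset.sum_congr rfl fun j _ => Finset.sum_congr rfl fun k _ => by
            rw [e5 j k]
      _ = _ := by rw [expand, m4, m5, m6]
  -- skew-symmetry consequences
  have K4 : (∑ k, ∑ j, ∑ l, s1 j k l k * c j l)
      = -∑ j, ∑ k, c j k * ∑ l, s1 j k l l := by
    rw [perm12 (fun k j l => s1 j k l k * c j l)]
    rw [show -∑ j, ∑ k, c j k * ∑ l, s1 j k l l
        = ∑ j, -∑ k, ∑ l, c j k * s1 j k l l by
      simp only [Finset.mul_sum, ← Finset.sum_neg_distrib]]
    refine Finset.sum_congr rfl fun j _ => ?_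
    calc ∑ k, ∑ l, s1 j k l k * c j l
        = ∑ k, ∑ l, -(s1 j l k k * c j l) := by
          exact Finset.sum_congr rfl fun k _ => Finset.sum_congr rfl fun l _ => by
            rw [hs1 j k l k]; ring
      _ = ∑ l, ∑ k, -(s1 j l k k * c j l) := Finset.sum_comm
      _ = -∑ k, ∑ l, c j k * s1 j k l l := by
          simp only [← Finset.sum_neg_distrib]
          exact Finset.sum_congr rfl fun k _ => Finset.sum_congr rfl fun l _ => by ring
  have K5 : (∑ k, ∑ j, ∑ l, s j k l * t j l k) = 0 := by
    rw [perm12 (fun k j l => s j k l * t j l k)]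
    rw [show (0 : ℝ) = ∑ j : Fin d, (0 : ℝ) by simp]
    refine Finset.sum_congr rfl fun j _ => ?_
    have e : (∑ k, ∑ l, s j k l * t j l k) = -(∑ k, ∑ l, s j k l * t j l k) := by
      conv_lhs => rw [Finset.sum_comm]
      rw [show (∑ l, ∑ k, s j k l * t j l k) = ∑ k, ∑ l, -(s j k l * t j l k) from
        Finset.sum_congr rfl fun l _ => Finset.sum_congr rfl fun k _ => by
          rw [hs j k l, ht j l k]; ring]
      simp [← Finset.sum_neg_distrib]
    linarith
  -- permutation matchings between the two sides
  have M2 : (∑ k, ∑ j, ∑ l, g j * (a1 k l * c j l))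
      = ∑ k, ∑ j, ∑ i, a1 k j * (g i * c i j) := by
    refine ((perm23 (fun k j l => g j * (a1 k l * c j l))).trans ?_)
    exact sum3congr _ _ fun k j i => by ring
  have M5 : (∑ k, ∑ j, ∑ l, g1 j k * (a k l * c j l))
      = ∑ k, ∑ j, ∑ i, a k j * (g1 i k * c i j) := by
    refine ((perm23 (fun k j l => g1 j k * (a k l * c j l))).trans ?_)
    exact sum3congr _ _ fun k j i => by ring
  have M6 : (∑ k, ∑ j, ∑ l, g j * (a k l * t j l k))
      = ∑ k, ∑ j, ∑ i, a k j * (g i * t i j k) := by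
    refine ((perm23 (fun k j l => g j * (a k l * t j l k))).trans ?_)
    exact sum3congr _ _ fun k j i => by ring
  rw [EL, ER, M2, M5, M6, K4, K5, H5]
  linarith

theorem stmt_12 (d : ℕ)
    (A : (Fin d → ℝ) → Matrix (Fin d) (Fin d) ℝ) (Abar : Matrix (Fin d) (Fin d) ℝ)
    (f : (Fin d → ℝ) → Fin d → ℝ) (u ubar : (Fin d → ℝ) → ℝ)
    (φ : Fin d → (Fin d → ℝ) → ℝ)
    (σ : Fin d → (Fin d → ℝ) → Matrix (Fin d) (Fin d) ℝ)
    (hA : ∀ i j, ContDiff ℝ (⊤ : ℕ∞) (fun x => A x i j))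
    (hf : ∀ i, ContDiff ℝ (⊤ : ℕ∞) (fun x => f x i))
    (hu : ContDiff ℝ (⊤ : ℕ∞) u) (hubar : ContDiff ℝ (⊤ : ℕ∞) ubar)
    (hφ : ∀ i, ContDiff ℝ (⊤ : ℕ∞) (φ i))
    (hσ : ∀ i k l, ContDiff ℝ (⊤ : ℕ∞) (fun x => σ i x k l))
    (lam : ℝ) (hlam : 0 < lam)
    (hellA : ∀ x (ξ : Fin d → ℝ), lam * ∑ i, ξ i ^ 2 ≤ ξ ⬝ᵥ (A x).mulVec ξ)
    (hbddA : ∀ x (ξ : Fin d → ℝ), ∑ i, ((A x).mulVec ξ) i ^ 2 ≤ ∑ i, ξ i ^ 2)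
    -- the two equations
    (hequ : ∀ x, -(dvg (fun y => (A y).mulVec (grad u y)) x) = dvg f x)
    (hequbar : ∀ x, -(dvg (fun y => Abar.mulVec (grad ubar y)) x) = dvg f x)
    -- corrector equations
    (heqφ : ∀ i x, dvg (fun y => (A y).mulVec (grad (φ i) y + Pi.single i 1)) x = 0)
    (hskew : ∀ i x k l, σ i x k l = - σ i x l k)
    (heqσ : ∀ i x, (fun k => ∑ l, pd (fun y => σ i y k l) l x) =
      (A x).mulVec (grad (φ i) x + Pi.single i 1) - Abar.mulVec (Pi.single i 1)) :
    ∀ x, -(dvg (fun y => (A y).mulVec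
        (grad (fun z => u z - (ubar z + ∑ i, φ i z * pd ubar i z)) y)) x) =
      dvg (fun y => ∑ j, (φ j y • A y - σ j y).mulVec (grad (pd ubar j) y)) x := by
  intro x
  have DA : ∀ i j, Differentiable ℝ (fun x => A x i j) := fun i j => (hA i j).differentiable (by simp)
  have Du : Differentiable ℝ u := hu.differentiable (by simp)
  have Dubar : Differentiable ℝ ubar := hubar.differentiable (by simp)
  have Dφ : ∀ i, Differentiable ℝ (φ i) := fun i => (hφ i).differentiable (by simp)
  have Dσ : ∀ i k l, Differentiable ℝ (fun x => σ i x k l) :=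
    fun i k l => (hσ i k l).differentiable (by simp)
  have h1 := hequ x
  have h2 := hequbar x
  have h3 := fun i => heqφ i x
  have h5 := fun j k => congrFun (heqσ j x) k
  simp (disch := fun_prop) only [dvg, grad, Matrix.mulVec, dotProduct, Pi.add_apply,
    Matrix.sub_apply, Matrix.smul_apply, smul_eq_mul, Pi.sub_apply, Finset.sum_apply,
    pd_sub, pd_add, pd_mul, pd_sum, pd_const, Pi.single_apply, mul_ite, mul_one, mul_zero,
    ite_mul, zero_mul, one_mul, Finset.sum_ite_eq', Finset.mem_univ, if_true, add_zero,
    zero_add] at h1 h2 h3 h5 ⊢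
  exact alg d (∑ i, pd (fun y => f y i) i x)
    (fun k j => A x k j) (fun k j => pd (fun y => A y k j) k x) (fun k j => Abar k j)
    (fun j => pd u j x) (fun j => pd ubar j x) (fun i => φ i x)
    (fun j k => pd (pd u j) k x) (fun j k => pd (pd ubar j) k x)
    (fun i j => pd (φ i) j x)
    (fun i j k => pd (pd (pd ubar i) j) k x)
    (fun i j k => pd (pd (φ i) j) k x)
    (fun j k l => σ j x k l)
    (fun j k l m => pd (fun y => σ j y k l) m x)
    (fun j k l => pd_comm (cd_pd hubar j))
    (fun j k l => hskew j x k l)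
    (fun j k l m => by
      show pd (fun y => σ j y k l) m x = -pd (fun y => σ j y l k) m x
      rw [show (fun y => σ j y k l) = (fun y => -σ j y l k) from
        funext fun y => hskew j y k l]
      exact pd_neg)
    h1 h2 h3 h5
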